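/- arXiv:2412.05639 — 2 statements merged into one kernel-verified Lean document; each statement's English description precedes it below -/
import Mathlib

section
/- Suppose ψ ∈ C(X), μ∞ ∈ M_T(X) and β₀ > 0 satisfy: μ∞ is an equilibrium state for βψ for every β ≥ β₀, and ∫ ψ dμ∞ = 0. Let φ ∈ C(X) be such that ∫ φ dμ∞ = Max(φ). Then for every ε > 0 and every t ≥ β₀/ε, μ∞ is an equilibrium state for t(φ + εψ); in particular, φ + εψ freezes at μ∞. -/
open MeasureTheory Filter Set
open scoped NNReal ENNReal

variable {X : Type*} [MetricSpace X] [CompactSpace X] [Nonempty X]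
  [MeasurableSpace X] [BorelSpace X]

/-- The set `M_T(X)` of `T`-invariant Borel probability measures on `X`,
equipped (as a subset of `ProbabilityMeasure X`) with the weak-* topology. -/
def InvMeas (T : X → X) : Set (ProbabilityMeasure X) :=
  {μ | (μ : Measure X).map T = (μ : Measure X)}

/-- The pressure `P(φ) = sup { h(μ) + ∫ φ dμ : μ ∈ M_T(X) }`. -/
noncomputable def press (T : X → X) (h : ProbabilityMeasure X → ℝ) (φ : C(X, ℝ)) : ℝ :=
  sSup ((fun μ : ProbabilityMeasure X => h μ + ∫ x, φ x ∂(μ : Measure X)) '' InvMeas T)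

/-- `μ` is an equilibrium state for `φ`: `μ ∈ M_T(X)` and `h(μ) + ∫ φ dμ = P(φ)`. -/
def IsEquilib (T : X → X) (h : ProbabilityMeasure X → ℝ) (φ : C(X, ℝ))
    (μ : ProbabilityMeasure X) : Prop :=
  μ ∈ InvMeas T ∧ h μ + ∫ x, φ x ∂(μ : Measure X) = press T h φ

/-- `Max(φ) = sup { ∫ φ dν : ν ∈ M_T(X) }.` -/
noncomputable def MaxInt (T : X → X) (φ : C(X, ℝ)) : ℝ :=
  sSup ((fun μ : ProbabilityMeasure X => ∫ x, φ x ∂(μ : Measure X)) '' InvMeas T)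

/-- `h_∞(φ) = sup { h(μ) : μ ∈ M_T(X), ∫ φ dμ = Max(φ) }`. -/
noncomputable def hInfty (T : X → X) (h : ProbabilityMeasure X → ℝ) (φ : C(X, ℝ)) : ℝ :=
  sSup (h '' {μ ∈ InvMeas T | ∫ x, φ x ∂(μ : Measure X) = MaxInt T φ})

/-!
Write `t • (φ + ε • ψ) = t • φ + (t * ε) • ψ`. As `t * ε ≥ β₀`, the measure `μ∞` is an equilibrium
state for `(t * ε) • ψ`, and as `t ≥ 0` it maximizes `ν ↦ ∫ t • φ dν` over `M_T(X)`. A measure that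
is an equilibrium state for one potential and maximizing for another is an equilibrium state for
their sum, since `h ν + ∫ (φ + ψ) dν ≤ P(φ) + ∫ ψ dμ = h μ + ∫ (φ + ψ) dμ`.
-/

section Equilibrium

omit [Nonempty X]

lemma ContinuousMap.integrable_of_compactSpace (f : C(X, ℝ)) (μ : Measure X) [IsFiniteMeasure μ] :
    Integrable f μ :=
  f.continuous.integrable_of_hasCompactSupport (HasCompactSupport.of_compactSpace f)

lemma ContinuousMap.integral_le_norm (f : C(X, ℝ)) (μ : Measure X) [IsProbabilityMeasure μ] :
    ∫ x, f x ∂μ ≤ ‖f‖ :=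
  (le_abs_self _).trans <| by
    simpa using (BoundedContinuousFunction.mkOfCompact f).norm_integral_le_norm μ

variable {T : X → X} {h : ProbabilityMeasure X → ℝ} {μ ν : ProbabilityMeasure X}

lemma integral_le_maxInt (φ : C(X, ℝ)) (hν : ν ∈ InvMeas T) :
    ∫ x, φ x ∂(ν : Measure X) ≤ MaxInt T φ :=
  le_csSup ⟨‖φ‖, forall_mem_image.2 fun μ _ => φ.integral_le_norm μ⟩ ⟨ν, hν, rfl⟩

lemma le_press (hbd : BddAbove (h '' InvMeas T)) (φ : C(X, ℝ)) (hν : ν ∈ InvMeas T) :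
    h ν + ∫ x, φ x ∂(ν : Measure X) ≤ press T h φ := by
  obtain ⟨C, hC⟩ := hbd
  refine le_csSup ⟨C + ‖φ‖, forall_mem_image.2 fun μ hμ => ?_⟩ ⟨ν, hν, rfl⟩
  exact add_le_add (hC (mem_image_of_mem h hμ)) (φ.integral_le_norm μ)

omit [CompactSpace X] [BorelSpace X] in
lemma isEquilib_of_forall_le {φ : C(X, ℝ)} (hμ : μ ∈ InvMeas T)
    (hle : ∀ ν ∈ InvMeas T,
      h ν + ∫ x, φ x ∂(ν : Measure X) ≤ h μ + ∫ x, φ x ∂(μ : Measure X)) :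
    IsEquilib T h φ μ :=
  ⟨hμ, (IsGreatest.csSup_eq (s := (fun σ : ProbabilityMeasure X =>
    h σ + ∫ x, φ x ∂(σ : Measure X)) '' InvMeas T) ⟨⟨μ, hμ, rfl⟩, forall_mem_image.2 hle⟩).symm⟩

lemma isMaxOn_integral_smul_of_eq_maxInt {φ : C(X, ℝ)}
    (hμ : ∫ x, φ x ∂(μ : Measure X) = MaxInt T φ) {t : ℝ} (ht : 0 ≤ t) :
    IsMaxOn (fun ν : ProbabilityMeasure X => ∫ x, (t • φ) x ∂(ν : Measure X)) (InvMeas T) μ :=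
  isMaxOn_iff.2 fun ν hν => by
    simp only [ContinuousMap.smul_apply, smul_eq_mul, integral_const_mul]
    exact mul_le_mul_of_nonneg_left (hμ ▸ integral_le_maxInt φ hν) ht

lemma IsEquilib.add_of_isMaxOn (hbd : BddAbove (h '' InvMeas T)) {φ ψ : C(X, ℝ)}
    (hφ : IsEquilib T h φ μ)
    (hψ : IsMaxOn (fun ν : ProbabilityMeasure X => ∫ x, ψ x ∂(ν : Measure X)) (InvMeas T) μ) :
    IsEquilib T h (φ + ψ) μ := by
  refine isEquilib_of_forall_le hφ.1 fun ν hν => ?_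
  have hsplit : ∀ σ : ProbabilityMeasure X, ∫ x, (φ + ψ) x ∂(σ : Measure X) =
      ∫ x, φ x ∂(σ : Measure X) + ∫ x, ψ x ∂(σ : Measure X) := fun σ =>
    integral_add (φ.integrable_of_compactSpace _) (ψ.integrable_of_compactSpace _)
  have hpress := le_press hbd φ hν
  rw [← hφ.2] at hpress
  rw [hsplit, hsplit]
  linarith [isMaxOn_iff.1 hψ ν hν]

end Equilibrium

theorem stmt5_general
    (T : X → X)
    (h : ProbabilityMeasure X → ℝ)
    (hbd : ∃ C : ℝ, ∀ μ ∈ InvMeas T, |h μ| ≤ C)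
    (ψ : C(X, ℝ)) (μinf : ProbabilityMeasure X) (β₀ : ℝ) (hβ₀ : 0 < β₀)
    (hfreeze : ∀ β : ℝ, β₀ ≤ β → IsEquilib T h (β • ψ) μinf)
    (φ : C(X, ℝ)) (hφmax : ∫ x, φ x ∂(μinf : Measure X) = MaxInt T φ) :
    ∀ ε : ℝ, 0 < ε → ∀ t : ℝ, β₀ / ε ≤ t → IsEquilib T h (t • (φ + ε • ψ)) μinf := by
  intro ε hε t ht
  have hbdd : BddAbove (h '' InvMeas T) :=
    let ⟨C, hC⟩ := hbd
    ⟨C, forall_mem_image.2 fun μ hμ => (abs_le.1 (hC μ hμ)).2⟩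
  have htε : β₀ ≤ t * ε := (div_le_iff₀ hε).1 ht
  have ht0 : 0 ≤ t := (div_pos hβ₀ hε).le.trans ht
  rw [smul_add, smul_smul, add_comm]
  exact (hfreeze _ htε).add_of_isMaxOn hbdd (isMaxOn_integral_smul_of_eq_maxInt hφmax ht0)

theorem stmt5
    (T : X → X) (hT : Continuous T) (hne : (InvMeas T).Nonempty)
    (h : ProbabilityMeasure X → ℝ)
    (hbd : ∃ C : ℝ, ∀ μ ∈ InvMeas T, |h μ| ≤ C)
    (haff : ∀ μ ν : ProbabilityMeasure X, μ ∈ InvMeas T → ν ∈ InvMeas T →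
      ∀ t : ℝ, 0 ≤ t → t ≤ 1 → ∀ σ : ProbabilityMeasure X,
        (σ : Measure X) =
          ENNReal.ofReal t • (μ : Measure X) + ENNReal.ofReal (1 - t) • (ν : Measure X) →
        h σ = t * h μ + (1 - t) * h ν)
    (ψ : C(X, ℝ)) (μinf : ProbabilityMeasure X) (β₀ : ℝ) (hβ₀ : 0 < β₀)
    (hfreeze : ∀ β : ℝ, β₀ ≤ β → IsEquilib T h (β • ψ) μinf)
    (hψint : ∫ x, ψ x ∂(μinf : Measure X) = 0)
    (φ : C(X, ℝ)) (hφmax : ∫ x, φ x ∂(μinf : Measure X) = MaxInt T φ) :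
    ∀ ε : ℝ, 0 < ε → ∀ t : ℝ, β₀ / ε ≤ t → IsEquilib T h (t • (φ + ε • ψ)) μinf :=
  stmt5_general T h hbd ψ μinf β₀ hβ₀ hfreeze φ hφmax
end

section
/- Let φ ∈ C(X) and β₀ > 0. Suppose φ freezes at inverse temperature β₀ (there exists μ ∈ M_T(X) that is an equilibrium state for βφ for all β ≥ β₀), but for every α with 0 < α < β₀, φ does not freeze at inverse temperature α. Then the function P_φ : β ↦ P(βφ) is not real-analytic at β₀. -/
open MeasureTheory Filter Set
open scoped NNReal ENNReal

variable {X : Type*} [MetricSpace X] [CompactSpace X] [Nonempty X]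
  [MeasurableSpace X] [BorelSpace X]

/-!
If `μ` is an equilibrium state for `βφ` for all `β ≥ β₀`, then `P(βφ) = h(μ) + β ∫ φ dμ` on
`[β₀, ∞)`. Were `β ↦ P(βφ)` analytic at `β₀`, the identity theorem would extend this affine
formula to a neighbourhood of `β₀`, making `μ` an equilibrium state for `βφ` for all `β ≥ α` with
some `α < β₀`, i.e. `φ` would already freeze at `α`.
-/

open Topology

theorem ContinuousMap.integral_smul_apply {Y : Type*} [TopologicalSpace Y] [MeasurableSpace Y]
    (ν : Measure Y) (c : ℝ) (f : C(Y, ℝ)) : ∫ y, (c • f) y ∂ν = c * ∫ y, f y ∂ν :=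
  integral_const_mul c _

theorem AnalyticAt.eventuallyEq_of_eventuallyEq_nhdsGT {E : Type*} [NormedAddCommGroup E]
    [NormedSpace ℝ E] {f g : ℝ → E} {x : ℝ} (hf : AnalyticAt ℝ f x) (hg : AnalyticAt ℝ g x)
    (hfg : f =ᶠ[𝓝[>] x] g) : f =ᶠ[𝓝 x] g :=
  (hf.frequently_eq_iff_eventually_eq hg).mp (hfg.frequently.filter_mono (nhdsGT_le_nhdsNE x))

theorem exists_pos_Icc_subset_of_eventually {p : ℝ → Prop} {x : ℝ} (hx : 0 < x)
    (hp : ∀ᶠ y in 𝓝 x, p y) : ∃ a, 0 < a ∧ a < x ∧ ∀ y ∈ Icc a x, p y := by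
  obtain ⟨l, ⟨hl₀, hlx⟩, hl⟩ := exists_Ioc_subset_of_mem_nhds' hp hx
  obtain ⟨a, hla, hax⟩ := exists_between hlx
  exact ⟨a, hl₀.trans_lt hla, hax, fun y hy => hl ⟨hla.trans_le hy.1, hy.2⟩⟩

section Freezing

variable {Y : Type*} [MetricSpace Y] [MeasurableSpace Y] {T : Y → Y}
  {h : ProbabilityMeasure Y → ℝ} {φ : C(Y, ℝ)} {μ : ProbabilityMeasure Y}

theorem isEquilib_smul_iff {β : ℝ} :
    IsEquilib T h (β • φ) μ ↔
      μ ∈ InvMeas T ∧ press T h (β • φ) = h μ + β * ∫ y, φ y ∂(μ : Measure Y) := by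
  rw [IsEquilib, ContinuousMap.integral_smul_apply, eq_comm]

theorem eventually_isEquilib_of_analyticAt_press {β₀ : ℝ}
    (hP : AnalyticAt ℝ (fun β : ℝ => press T h (β • φ)) β₀)
    (hμ : ∀ β : ℝ, β₀ ≤ β → IsEquilib T h (β • φ) μ) :
    ∀ᶠ β in 𝓝 β₀, IsEquilib T h (β • φ) μ := by
  have hμinv : μ ∈ InvMeas T := (hμ β₀ le_rfl).1
  have haffine : AnalyticAt ℝ (fun β : ℝ => h μ + β * ∫ y, φ y ∂(μ : Measure Y)) β₀ :=
    analyticAt_const.add (analyticAt_id.mul analyticAt_const)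
  have hright : (fun β : ℝ => press T h (β • φ)) =ᶠ[𝓝[>] β₀]
      fun β => h μ + β * ∫ y, φ y ∂(μ : Measure Y) :=
    eventually_nhdsWithin_of_forall fun β hβ => (isEquilib_smul_iff.mp (hμ β hβ.le)).2
  filter_upwards [hP.eventuallyEq_of_eventuallyEq_nhdsGT haffine hright] with β hβ
  exact isEquilib_smul_iff.mpr ⟨hμinv, hβ⟩

end Freezing

theorem stmt10_general
    (T : X → X)
    (h : ProbabilityMeasure X → ℝ)
    (φ : C(X, ℝ)) (β₀ : ℝ) (hβ₀ : 0 < β₀)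
    (hfreeze : ∃ μ : ProbabilityMeasure X, ∀ β : ℝ, β₀ ≤ β → IsEquilib T h (β • φ) μ)
    (hmin : ∀ α : ℝ, 0 < α → α < β₀ →
      ¬ ∃ μ : ProbabilityMeasure X, ∀ β : ℝ, α ≤ β → IsEquilib T h (β • φ) μ) :
    ¬ AnalyticAt ℝ (fun β : ℝ => press T h (β • φ)) β₀ := by
  intro hP
  obtain ⟨μ, hμ⟩ := hfreeze
  obtain ⟨α, hα₀, hαβ₀, hnear⟩ :=
    exists_pos_Icc_subset_of_eventually hβ₀ (eventually_isEquilib_of_analyticAt_press hP hμ)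
  refine hmin α hα₀ hαβ₀ ⟨μ, fun β hαβ => ?_⟩
  rcases le_total β₀ β with hβ | hβ
  · exact hμ β hβ
  · exact hnear β ⟨hαβ, hβ⟩

theorem stmt10
    (T : X → X) (hT : Continuous T) (hne : (InvMeas T).Nonempty)
    (h : ProbabilityMeasure X → ℝ)
    (hbd : ∃ C : ℝ, ∀ μ ∈ InvMeas T, |h μ| ≤ C)
    (haff : ∀ μ ν : ProbabilityMeasure X, μ ∈ InvMeas T → ν ∈ InvMeas T →
      ∀ t : ℝ, 0 ≤ t → t ≤ 1 → ∀ σ : ProbabilityMeasure X,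
        (σ : Measure X) =
          ENNReal.ofReal t • (μ : Measure X) + ENNReal.ofReal (1 - t) • (ν : Measure X) →
        h σ = t * h μ + (1 - t) * h ν)
    (φ : C(X, ℝ)) (β₀ : ℝ) (hβ₀ : 0 < β₀)
    (hfreeze : ∃ μ : ProbabilityMeasure X, ∀ β : ℝ, β₀ ≤ β → IsEquilib T h (β • φ) μ)
    (hmin : ∀ α : ℝ, 0 < α → α < β₀ →
      ¬ ∃ μ : ProbabilityMeasure X, ∀ β : ℝ, α ≤ β → IsEquilib T h (β • φ) μ) :
    ¬ AnalyticAt ℝ (fun β : ℝ => press T h (β • φ)) β₀ :=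
  stmt10_general T h φ β₀ hβ₀ hfreeze hmin
end
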